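/- arXiv:0910.3715 — 2 statements merged into one kernel-verified Lean document; each statement's English description precedes it below -/
import Mathlib

section
/- Let α be a nonzero algebraic real number of degree m over ℚ, let L be the Liouville constant, and let α_k = p_k/q_k with p_k = 10^{k!} Σ_{j=1}^k 10^{-j!}, q_k = 10^{k!}. Then γ_k := α·α_k is algebraic of degree m, and |αL - γ_k| ≤ c · H(α_k)^{-(k+1)} for all k ≥ 1, where c = 10|α|/9. -/
open Polynomial Filter

/-- Primitive integer minimal polynomial of a real number. -/
noncomputable def intMin (x : ℝ) : Polynomial ℤ :=
  (IsLocalization.integerNormalization (nonZeroDivisors ℤ) (minpoly ℚ x)).primPart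

/-- Height of an integer polynomial: max absolute value of its coefficients. -/
def polyHeight (P : Polynomial ℤ) : ℕ :=
  (Finset.range (P.natDegree + 1)).sup fun i => (P.coeff i).natAbs

/-- Height of an algebraic real number. -/
noncomputable def aheight (x : ℝ) : ℕ := polyHeight (intMin x)

/-- Degree of a real number over ℚ. -/
noncomputable def adeg (x : ℝ) : ℕ := (minpoly ℚ x).natDegree

/-- Liouville constant L = ∑ 10^{-j!}, j ≥ 1. -/
noncomputable def Lconst : ℝ := ∑' j : ℕ, 1 / (10 : ℝ) ^ (Nat.factorial (j + 1))

/-- Numerator of k-th truncation of L. -/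
def pk (k : ℕ) : ℤ := ∑ j ∈ Finset.range k, 10 ^ ((Nat.factorial k) - (Nat.factorial (j + 1)))

/-- Denominator of k-th truncation of L. -/
def qk (k : ℕ) : ℤ := 10 ^ (Nat.factorial k)

/-- Set of degree-n algebraic approximants witnessing exponent w. -/
noncomputable def wSet (ξ : ℝ) (n : ℕ) (w : ℝ) : Set ℝ :=
  {γ : ℝ | IsAlgebraic ℚ γ ∧ adeg γ = n ∧ 0 < |ξ - γ| ∧
    |ξ - γ| < (aheight γ : ℝ) ^ (-w - 1)}

/-- ξ is a U_m-number: w*_m(ξ) = ∞ and w*_n(ξ) < ∞ for 1 ≤ n < m. -/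
noncomputable def IsUm (ξ : ℝ) (m : ℕ) : Prop :=
  (∀ w : ℝ, (wSet ξ m w).Infinite) ∧
    ∀ n : ℕ, 1 ≤ n → n < m → ∃ w : ℝ, (wSet ξ n w).Finite

/-- ξ is a Liouville number. -/
def IsLiouvilleNum (x : ℝ) : Prop :=
  ∀ w : ℝ, 0 < w →
    {r : ℚ | 0 < |x - (r : ℝ)| ∧ |x - (r : ℝ)| < (r.den : ℝ) ^ (-w)}.Infinite

/-- Height of a rational number: max of |numerator| and denominator. -/
def qheight (r : ℚ) : ℕ := max r.num.natAbs r.den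

/-!
`L - α_k` is the remainder of the Liouville series `∑ 10^{-i!}` after the term `i = k`, which
is at most `(1 - 1/10)⁻¹ · 10^{-(k+1)!} = (10/9) · q_k^{-(k+1)}`. Since `0 ≤ α_k ≤ 1`, the
height of `α_k` is its reduced denominator, a divisor of `q_k`. The degree is unchanged because
the minimal polynomial of `c • α` is the minimal polynomial of `α` with its roots scaled by `c`.
-/

lemma adeg_mul_ratCast (x : ℝ) {c : ℚ} (hc : c ≠ 0) : adeg (x * c) = adeg x := by
  have hsmul : x * c = c • x := by rw [Rat.smul_def, mul_comm]
  by_cases hx : IsIntegral ℚ x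
  · rw [adeg, adeg, hsmul, IsIntegrallyClosed.minpoly_smul hc hx, natDegree_scaleRoots]
  · have hcx : ¬IsIntegral ℚ (c • x) := fun h => hx <| by
      simpa [smul_smul, inv_mul_cancel₀ hc] using h.smul c⁻¹
    rw [adeg, adeg, hsmul, minpoly.eq_zero hx, minpoly.eq_zero hcx]

lemma Rat.den_intCast_div_le (a : ℤ) {b : ℤ} (hb : 0 < b) : (((a : ℚ) / b).den : ℤ) ≤ b :=
  Int.le_of_dvd hb (by rw [← Rat.divInt_eq_div]; exact Rat.den_dvd a b)

lemma qheight_eq_den {r : ℚ} (h0 : 0 ≤ r) (h1 : r ≤ 1) : qheight r = r.den := by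
  have hnum : r.num.natAbs ≤ r.den := by
    have := Rat.num_le_denom_iff.2 h1
    have := Rat.num_nonneg.2 h0
    omega
  exact max_eq_right hnum

open LiouvilleNumber

lemma Lconst_add_one_div_ten : Lconst + 1 / 10 = liouvilleNumber 10 := by
  rw [liouvilleNumber, (LiouvilleNumber.summable (by norm_num)).tsum_eq_zero_add, Lconst]
  simp only [one_div, Nat.factorial_zero, pow_one]
  ring

lemma pk_div_qk (k : ℕ) :
    (pk k : ℝ) / qk k = ∑ j ∈ Finset.range k, 1 / (10 : ℝ) ^ (j + 1).factorial := by
  rw [pk, qk]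
  push_cast
  rw [Finset.sum_div]
  refine Finset.sum_congr rfl fun j hj => ?_
  rw [div_eq_div_iff (by positivity) (by positivity), one_mul, ← pow_add,
    Nat.sub_add_cancel (Nat.factorial_le (Finset.mem_range.1 hj))]

lemma Lconst_sub_pk_div_qk (k : ℕ) : Lconst - pk k / qk k = remainder 10 k := by
  have hpartial : (pk k : ℝ) / qk k + 1 / 10 = partialSum 10 k := by
    rw [pk_div_qk, partialSum, Finset.sum_range_succ']
    simp
  linarith [Lconst_add_one_div_ten, partialSum_add_remainder (by norm_num : (1 : ℝ) < 10) k]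

lemma remainder_ten_le (k : ℕ) :
    remainder 10 k ≤ 10 / 9 / ((10 : ℝ) ^ k.factorial) ^ (k + 1) := by
  rw [← pow_mul, mul_comm, ← Nat.factorial_succ]
  refine (remainder_lt' k (by norm_num : (1 : ℝ) < 10)).le.trans_eq ?_
  norm_num
  ring

lemma pk_nonneg (k : ℕ) : 0 ≤ pk k := Finset.sum_nonneg fun _ _ => by positivity

lemma pk_pos {k : ℕ} (hk : 1 ≤ k) : 0 < pk k :=
  Finset.sum_pos (fun _ _ => by positivity) ⟨0, Finset.mem_range.2 hk⟩

lemma qk_pos (k : ℕ) : 0 < qk k := by rw [qk]; positivity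

lemma pk_div_qk_le_one (k : ℕ) : (pk k : ℚ) / qk k ≤ 1 := by
  have hL : Lconst ≤ 10 / 9 / 10 := by
    simpa [pk] using (Lconst_sub_pk_div_qk 0).trans_le (remainder_ten_le 0)
  have htail := remainder_pos (by norm_num : (1 : ℝ) < 10) k
  rw [← Lconst_sub_pk_div_qk] at htail
  have h : ((pk k : ℚ) / qk k : ℝ) ≤ 1 := by push_cast; linarith
  exact_mod_cast h

lemma qheight_pk_div_qk_le (k : ℕ) : qheight ((pk k : ℚ) / qk k) ≤ 10 ^ k.factorial := by
  have h0 : 0 ≤ (pk k : ℚ) / qk k := div_nonneg (mod_cast pk_nonneg k) (mod_cast (qk_pos k).le)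
  have hden := Rat.den_intCast_div_le (pk k) (qk_pos k)
  rw [qheight_eq_den h0 (pk_div_qk_le_one k)]
  rw [qk] at hden
  exact_mod_cast hden

theorem stmt7_general (α : ℝ) (m : ℕ)
    (hm : adeg α = m) (k : ℕ) (hk : 1 ≤ k) :
    adeg (α * ((pk k : ℝ) / (qk k : ℝ))) = m ∧
      |α * Lconst - α * ((pk k : ℝ) / (qk k : ℝ))| ≤
        (10 * |α| / 9) / (qheight ((pk k : ℚ) / (qk k : ℚ)) : ℝ) ^ (k + 1) := by
  have hratio : (pk k : ℝ) / qk k = (((pk k : ℚ) / qk k : ℚ) : ℝ) := by push_cast; rfl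
  have hne : (pk k : ℚ) / qk k ≠ 0 :=
    div_ne_zero (mod_cast (pk_pos hk).ne') (mod_cast (qk_pos k).ne')
  have hH : (qheight ((pk k : ℚ) / qk k) : ℝ) ≤ 10 ^ k.factorial := by
    exact_mod_cast qheight_pk_div_qk_le k
  have hH0 : (0 : ℝ) < qheight ((pk k : ℚ) / qk k) := by
    rw [qheight]; exact_mod_cast lt_max_of_lt_right (Rat.den_pos _)
  refine ⟨by rw [hratio, adeg_mul_ratCast α hne, hm], ?_⟩
  rw [← mul_sub, abs_mul, Lconst_sub_pk_div_qk, abs_of_pos (remainder_pos (by norm_num) k)]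
  calc |α| * remainder 10 k
      ≤ |α| * (10 / 9 / ((10 : ℝ) ^ k.factorial) ^ (k + 1)) := by
        gcongr; exact remainder_ten_le k
    _ = 10 * |α| / 9 / ((10 : ℝ) ^ k.factorial) ^ (k + 1) := by ring
    _ ≤ _ := by gcongr

theorem stmt7 (α : ℝ) (hα0 : α ≠ 0) (hα : IsAlgebraic ℚ α) (m : ℕ)
    (hm : adeg α = m) (k : ℕ) (hk : 1 ≤ k) :
    adeg (α * ((pk k : ℝ) / (qk k : ℝ))) = m ∧
      |α * Lconst - α * ((pk k : ℝ) / (qk k : ℝ))| ≤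
        (10 * |α| / 9) / (qheight ((pk k : ℚ) / (qk k : ℚ)) : ℝ) ^ (k + 1) :=
  stmt7_general α m hm k hk
end

section
/- Let α be a real algebraic number of degree m and L the Liouville constant. Then for each n with 1 ≤ n ≤ m-1, w*_n(α + L) ≤ 2m²n + m - 1. -/
open Polynomial Filter

/-- ξ is a Liouville number. -/
def IsLiouvilleReal (x : ℝ) : Prop :=
  ∀ w : ℝ, 0 < w →
    {r : ℚ | 0 < |x - (r : ℝ)| ∧ |x - (r : ℝ)| < (r.den : ℝ) ^ (-w)}.Infinite

/-!
Write `m = deg α`, `ξ = α + L` and `p_k / q_k` for the truncations of `L`, so that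
`|L - p_k / q_k| < q_k ^ (-k)` and `q_(k+1) = q_k ^ (k+1)`. For `P ∈ ℤ[X]` of degree `n < m`,
`P(α + p_k / q_k)` is a nonzero element of `ℚ(α)`; after clearing denominators its norm is a
nonzero integer, and bounding its other conjugates gives the Liouville-type estimate
`|P(α + p_k / q_k)| ≫ H(P) ^ (-(m-1)) q_k ^ (-n m)`. Take the least `k` for which the truncation
error is at most half of this bound: then it transfers to `|P(ξ)|`, and minimality of `k`
together with `q_k = q_(k-1) ^ k` gives `q_k ^ (n m) ≪ H(P) ^ (2 n m²)`, so
`|P(ξ)| ≫ H(P) ^ (-(m - 1 + 2 n m²))`. For an approximant `γ` of degree `n` with minimal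
polynomial `P`, `|P(ξ)| = |P(ξ) - P(γ)| ≪ H(γ) |ξ - γ|`, hence `|ξ - γ| ≫ H(γ) ^ (-(m + 2 n m²))`,
and when `w + 1 > m + 2 n m²` only approximants of bounded height, finitely many, remain.
-/

lemma intMin_ne_zero (x : ℝ) : intMin x ≠ 0 :=
  primPart_ne_zero _

lemma natDegree_intMin (x : ℝ) : (intMin x).natDegree = adeg x := by
  obtain ⟨b, hb, hmap⟩ :=
    IsLocalization.integerNormalization_spec (nonZeroDivisors ℤ) (minpoly ℚ x)
  have hb0 : (b : ℚ) ≠ 0 := by exact_mod_cast nonZeroDivisors.ne_zero hb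
  rw [intMin, natDegree_primPart, ← natDegree_map_eq_of_injective (algebraMap ℤ ℚ).injective_int,
    hmap, zsmul_eq_mul, ← C_eq_intCast, natDegree_C_mul hb0, adeg]

lemma aeval_intMin {x : ℝ} (hx : IsAlgebraic ℚ x) : aeval x (intMin x) = 0 := by
  refine aeval_primPart_eq_zero ?_ ?_
  · exact (IsLocalization.integerNormalization_eq_zero_iff le_rfl _).not.mpr
      (minpoly.ne_zero hx.isIntegral)
  · exact IsLocalization.integerNormalization_aeval_eq_zero _ _ (minpoly.aeval ℚ x)

lemma natAbs_coeff_le_polyHeight (P : ℤ[X]) (i : ℕ) : (P.coeff i).natAbs ≤ polyHeight P := by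
  rcases le_or_gt i P.natDegree with h | h
  · exact Finset.le_sup (f := fun i => (P.coeff i).natAbs) (Finset.mem_range_succ_iff.mpr h)
  · simp [coeff_eq_zero_of_natDegree_lt h]

lemma abs_coeff_le_polyHeight (P : ℤ[X]) (i : ℕ) : |(P.coeff i : ℝ)| ≤ polyHeight P := by
  rw [← Int.cast_abs, ← Int.natCast_natAbs, Int.cast_natCast]
  exact_mod_cast natAbs_coeff_le_polyHeight P i

lemma one_le_polyHeight {P : ℤ[X]} (hP : P ≠ 0) : 1 ≤ polyHeight P :=
  (Int.natAbs_pos.mpr (leadingCoeff_ne_zero.mpr hP)).trans_le (natAbs_coeff_le_polyHeight P _)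

lemma one_le_aheight (x : ℝ) : 1 ≤ aheight x :=
  one_le_polyHeight (intMin_ne_zero x)

lemma finite_setOf_adeg_eq_aheight_le (n B : ℕ) :
    {γ : ℝ | IsAlgebraic ℚ γ ∧ adeg γ = n ∧ aheight γ ≤ B}.Finite := by
  classical
  refine (bUnion_roots_finite (algebraMap ℤ ℝ) n (Set.finite_Icc (-(B : ℤ)) B)).subset ?_
  rintro γ ⟨hγ, hdeg, hB⟩
  refine Set.mem_biUnion (x := intMin γ) ⟨(natDegree_intMin γ).trans_le hdeg.le, fun i => ?_⟩ ?_
  · have := (natAbs_coeff_le_polyHeight (intMin γ) i).trans hB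
    exact Set.mem_Icc.mpr (by omega)
  · rw [Finset.mem_coe, Multiset.mem_toFinset, mem_roots_map_of_injective
      (algebraMap ℤ ℝ).injective_int (intMin_ne_zero γ)]
    exact aeval_intMin hγ

section PolynomialBounds

variable {𝕜 : Type*} [NormedCommRing 𝕜] [NormOneClass 𝕜]

lemma norm_pow_sub_pow_le {x y : 𝕜} {R : ℝ} (hx : ‖x‖ ≤ R) (hy : ‖y‖ ≤ R) (i : ℕ) :
    ‖x ^ i - y ^ i‖ ≤ i * R ^ (i - 1) * ‖x - y‖ := by
  have hR : 0 ≤ R := (norm_nonneg x).trans hx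
  induction i with
  | zero => simp
  | succ i ih =>
    have hsplit : x ^ (i + 1) - y ^ (i + 1) = x ^ i * (x - y) + (x ^ i - y ^ i) * y := by ring
    have hxi : ‖x ^ i‖ ≤ R ^ i := (norm_pow_le x i).trans (pow_le_pow_left₀ (norm_nonneg x) hx i)
    calc ‖x ^ (i + 1) - y ^ (i + 1)‖
        ≤ ‖x ^ i‖ * ‖x - y‖ + ‖x ^ i - y ^ i‖ * ‖y‖ := by
          rw [hsplit]
          exact (norm_add_le _ _).trans (add_le_add (norm_mul_le _ _) (norm_mul_le _ _))
      _ ≤ R ^ i * ‖x - y‖ + i * R ^ (i - 1) * ‖x - y‖ * R := by gcongr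
      _ = (i + 1 : ℕ) * R ^ (i + 1 - 1) * ‖x - y‖ := by
          rcases i with _ | i
          · simp
          · push_cast; ring

variable {P : ℤ[X]} {n : ℕ} {R : ℝ}

lemma norm_aeval_le (hP : P.natDegree ≤ n) (hR : 1 ≤ R) {x : 𝕜} (hx : ‖x‖ ≤ R) :
    ‖aeval x P‖ ≤ (n + 1) * polyHeight P * R ^ n := by
  rw [aeval_eq_sum_range' (Nat.lt_succ_of_le hP)]
  calc ‖∑ i ∈ Finset.range (n + 1), P.coeff i • x ^ i‖
      ≤ ∑ i ∈ Finset.range (n + 1), (polyHeight P : ℝ) * R ^ n := by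
        refine (norm_sum_le _ _).trans (Finset.sum_le_sum fun i hi => ?_)
        refine (norm_zsmul_le _ _).trans (mul_le_mul (abs_coeff_le_polyHeight P i) ?_
          (norm_nonneg _) (Nat.cast_nonneg _))
        exact (norm_pow_le x i).trans ((pow_le_pow_left₀ (norm_nonneg x) hx i).trans
          (pow_le_pow_right₀ hR (Finset.mem_range_succ_iff.mp hi)))
    _ = (n + 1) * polyHeight P * R ^ n := by
        rw [Finset.sum_const, Finset.card_range, nsmul_eq_mul]; push_cast; ring

lemma norm_aeval_sub_aeval_le (hP : P.natDegree ≤ n) (hR : 1 ≤ R) {x y : 𝕜}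
    (hx : ‖x‖ ≤ R) (hy : ‖y‖ ≤ R) :
    ‖aeval x P - aeval y P‖ ≤ (n + 1) ^ 2 * polyHeight P * R ^ n * ‖x - y‖ := by
  rw [aeval_eq_sum_range' (Nat.lt_succ_of_le hP), aeval_eq_sum_range' (Nat.lt_succ_of_le hP),
    ← Finset.sum_sub_distrib]
  calc ‖∑ i ∈ Finset.range (n + 1), (P.coeff i • x ^ i - P.coeff i • y ^ i)‖
      ≤ ∑ i ∈ Finset.range (n + 1), (polyHeight P : ℝ) * ((n + 1) * R ^ n * ‖x - y‖) := by
        refine (norm_sum_le _ _).trans (Finset.sum_le_sum fun i hi => ?_)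
        have hi : i ≤ n := Finset.mem_range_succ_iff.mp hi
        rw [← smul_sub]
        refine (norm_zsmul_le _ _).trans (mul_le_mul (abs_coeff_le_polyHeight P i) ?_
          (norm_nonneg _) (Nat.cast_nonneg _))
        refine (norm_pow_sub_pow_le hx hy i).trans ?_
        gcongr
        · exact_mod_cast hi.trans n.le_succ
        · omega
    _ = (n + 1) ^ 2 * polyHeight P * R ^ n * ‖x - y‖ := by
        rw [Finset.sum_const, Finset.card_range, nsmul_eq_mul]; push_cast; ring

end PolynomialBounds

section LiouvilleConstant

open LiouvilleNumber

lemma one_le_qk (k : ℕ) : 1 ≤ qk k :=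
  one_le_pow₀ (by norm_num)

lemma qk_succ (k : ℕ) : qk (k + 1) = qk k ^ (k + 1) := by
  rw [qk, qk, ← pow_mul, Nat.factorial_succ, mul_comm]

lemma Lconst_eq_remainder : Lconst = remainder 10 0 :=
  rfl

lemma Lconst_nonneg : 0 ≤ Lconst :=
  (remainder_pos (by norm_num) 0).le

lemma Lconst_lt_one : Lconst < 1 := by
  simpa [Lconst_eq_remainder] using remainder_lt (m := 10) 0 (by norm_num)

lemma abs_Lconst_sub_pk_div_qk_lt (k : ℕ) : |Lconst - pk k / qk k| < 1 / (qk k : ℝ) ^ k := by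
  rw [Lconst_sub_pk_div_qk, abs_of_pos (remainder_pos (by norm_num) k), qk]
  push_cast
  exact remainder_lt k (by norm_num)

lemma pk_le_qk (k : ℕ) : pk k ≤ qk k := by
  have hq : (0 : ℝ) < qk k := Int.cast_pos.mpr (zero_lt_one.trans_le (one_le_qk k))
  have : (pk k : ℝ) / qk k ≤ 1 := by
    linarith [Lconst_lt_one, remainder_pos (m := 10) (by norm_num) k, Lconst_sub_pk_div_qk k]
  exact_mod_cast (div_le_one hq).mp this

lemma abs_add_Lconst_le (α : ℝ) : |α + Lconst| ≤ |α| + 1 :=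
  (abs_add_le _ _).trans (by rw [abs_of_nonneg Lconst_nonneg]; linarith [Lconst_lt_one])

lemma abs_add_pk_div_qk_le (α : ℝ) (k : ℕ) : |α + pk k / qk k| ≤ |α| + 1 := by
  have hq : (0 : ℝ) < qk k := Int.cast_pos.mpr (zero_lt_one.trans_le (one_le_qk k))
  have hpk : (0 : ℝ) ≤ pk k := Int.cast_nonneg (pk_nonneg k)
  refine (abs_add_le _ _).trans ?_
  rw [abs_of_nonneg (div_nonneg hpk hq.le)]
  linarith [(div_le_one hq).mpr (Int.cast_le.mpr (pk_le_qk k) : (pk k : ℝ) ≤ qk k)]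

lemma abs_aeval_add_pk_div_qk_sub_mul_le (α : ℝ) {P : ℤ[X]} {n : ℕ} (hP : P.natDegree ≤ n)
    (k : ℕ) :
    |aeval (α + pk k / qk k) P - aeval (α + Lconst) P| * (qk k : ℝ) ^ k ≤
      (n + 1) ^ 2 * (|α| + 1) ^ n * polyHeight P := by
  have hR : 1 ≤ |α| + 1 := by linarith [abs_nonneg α]
  have hq : (0 : ℝ) < qk k := Int.cast_pos.mpr (zero_lt_one.trans_le (one_le_qk k))
  have hlip := norm_aeval_sub_aeval_le (x := α + pk k / qk k) (y := α + Lconst) hP hR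
    (abs_add_pk_div_qk_le α k) (abs_add_Lconst_le α)
  have happrox : |α + pk k / qk k - (α + Lconst)| * (qk k : ℝ) ^ k ≤ 1 := by
    have h := abs_Lconst_sub_pk_div_qk_lt k
    rw [lt_div_iff₀ (by positivity), abs_sub_comm] at h
    exact h.le.trans_eq' (by ring_nf)
  rw [Real.norm_eq_abs, Real.norm_eq_abs] at hlip
  calc _ ≤ (n + 1) ^ 2 * polyHeight P * (|α| + 1) ^ n *
        (|α + pk k / qk k - (α + Lconst)| * (qk k : ℝ) ^ k) := by
        rw [← mul_assoc]; gcongr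
    _ ≤ (n + 1) ^ 2 * (|α| + 1) ^ n * polyHeight P := by
        rw [mul_right_comm _ (polyHeight P : ℝ)]
        exact mul_le_of_le_one_right (by positivity) happrox

end LiouvilleConstant

lemma exists_qk_pow_bounds (t : ℕ) :
    ∃ C : ℝ, 1 ≤ C ∧ ∀ N : ℝ, 1 ≤ N →
      ∃ k, t ≤ k ∧ N ≤ (qk k : ℝ) ^ (k - t) ∧ (qk k : ℝ) ^ t ≤ C * N ^ (2 * t) := by
  classical
  have hq : ∀ k, (1 : ℝ) ≤ qk k := fun k => by exact_mod_cast one_le_qk k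
  refine ⟨(qk (2 * t + 2) : ℝ) ^ t, one_le_pow₀ (hq _), fun N hN => ?_⟩
  have hex : ∃ k, 2 * t + 2 ≤ k ∧ N ≤ (qk k : ℝ) ^ (k - t) := by
    obtain ⟨j, hj⟩ := pow_unbounded_of_one_lt N (by norm_num : (1 : ℝ) < 10)
    refine ⟨j + 2 * t + 2, by omega, hj.le.trans ?_⟩
    have hexp : j ≤ (j + 2 * t + 2).factorial * (j + 2 * t + 2 - t) :=
      (Nat.self_le_factorial _).trans' (by omega) |>.trans (Nat.le_mul_of_pos_right _ (by omega))
    rw [qk, Int.cast_pow, ← pow_mul]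
    exact pow_le_pow_right₀ (by norm_num) hexp
  obtain ⟨hk, hNk⟩ := Nat.find_spec hex
  refine ⟨Nat.find hex, by omega, hNk, ?_⟩
  rcases hk.eq_or_lt with hk | hk
  · rw [← hk]
    exact le_mul_of_one_le_right (zero_le_one.trans (one_le_pow₀ (hq _))) (one_le_pow₀ hN)
  obtain ⟨k, hk'⟩ : ∃ k, Nat.find hex = k + 1 := ⟨Nat.find hex - 1, by omega⟩
  rw [hk'] at hk ⊢
  have hmin : (qk k : ℝ) ^ (k - t) < N := by
    have := Nat.find_min hex (show k < Nat.find hex by omega)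
    push Not at this
    exact this (by omega)
  calc (qk (k + 1) : ℝ) ^ t = (qk k : ℝ) ^ ((k + 1) * t) := by rw [qk_succ, Int.cast_pow, ← pow_mul]
    _ ≤ (qk k : ℝ) ^ ((k - t) * (2 * t)) := pow_le_pow_right₀ (hq k)
        ((Nat.mul_le_mul_right t (show k + 1 ≤ 2 * (k - t) by omega)).trans_eq (by ring))
    _ = ((qk k : ℝ) ^ (k - t)) ^ (2 * t) := pow_mul _ _ _
    _ ≤ N ^ (2 * t) := pow_le_pow_left₀ (by have := hq k; positivity) hmin.le _
    _ ≤ _ := le_mul_of_one_le_left (by positivity) (one_le_pow₀ (hq _))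

lemma isIntegral_pow_smul_aeval {R A : Type*} [CommRing R] [CommRing A] [Algebra R A]
    {e : R} {x : A} (hx : IsIntegral R (e • x)) {P : R[X]} {n : ℕ} (hP : P.natDegree ≤ n) :
    IsIntegral R (e ^ n • aeval x P) := by
  have hscale : e ^ P.natDegree • aeval x P = aeval (e • x) (scaleRoots P e) := by
    rw [aeval_def, aeval_def, Algebra.smul_def, Algebra.smul_def, scaleRoots_eval₂_mul, map_pow]
  rw [← Nat.sub_add_cancel hP, pow_add, mul_smul, hscale]
  exact (adjoin_le_integralClosure hx (aeval_mem_adjoin_singleton R _)).smul _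

section NumberField

variable {K : Type*} [Field K] [Algebra ℚ K] [FiniteDimensional ℚ K]

lemma one_le_prod_norm_embeddings {b : K} (hb : IsIntegral ℤ b) (hb0 : b ≠ 0) :
    1 ≤ ∏ σ : K →ₐ[ℚ] ℂ, ‖σ b‖ := by
  obtain ⟨z, hz⟩ := IsIntegrallyClosed.isIntegral_iff.mp (Algebra.isIntegral_norm ℚ hb)
  have hz0 : z ≠ 0 := by
    rintro rfl
    exact Algebra.norm_ne_zero_iff.mpr hb0 (by rw [← hz, map_zero])
  rw [← norm_prod, ← Algebra.norm_eq_prod_embeddings ℚ ℂ b, ← hz]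
  simpa using (Int.cast_le (R := ℝ)).mpr (Int.one_le_abs hz0)

lemma one_le_norm_mul_pow_finrank_sub_one {b : K} (hb : IsIntegral ℤ b) (hb0 : b ≠ 0)
    (σ₀ : K →ₐ[ℚ] ℂ) {T : ℝ} (hT : ∀ σ : K →ₐ[ℚ] ℂ, ‖σ b‖ ≤ T) :
    1 ≤ ‖σ₀ b‖ * T ^ (Module.finrank ℚ K - 1) := by
  classical
  calc 1 ≤ ∏ σ : K →ₐ[ℚ] ℂ, ‖σ b‖ := one_le_prod_norm_embeddings hb hb0
    _ = ‖σ₀ b‖ * ∏ σ ∈ Finset.univ.erase σ₀, ‖σ b‖ :=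
        (Finset.mul_prod_erase _ _ (Finset.mem_univ σ₀)).symm
    _ ≤ ‖σ₀ b‖ * ∏ σ ∈ Finset.univ.erase σ₀, T := by
        gcongr with σ
        exact hT σ
    _ = ‖σ₀ b‖ * T ^ (Module.finrank ℚ K - 1) := by
        rw [Finset.prod_const, Finset.card_erase_of_mem (Finset.mem_univ _), Finset.card_univ,
          AlgHom.card]

lemma one_le_pow_mul_norm_aeval_mul {x : K} {e : ℤ} (he : e ≠ 0) (hx : IsIntegral ℤ (e • x))
    {M : ℝ} (hM : 1 ≤ M) (hxM : ∀ σ : K →ₐ[ℚ] ℂ, ‖σ x‖ ≤ M) {P : ℤ[X]} {n : ℕ}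
    (hPn : P.natDegree ≤ n) (hP : aeval x P ≠ 0) (σ₀ : K →ₐ[ℚ] ℂ) :
    1 ≤ |(e : ℝ)| ^ (n * Module.finrank ℚ K) * ‖σ₀ (aeval x P)‖ *
      ((n + 1) * polyHeight P * M ^ n) ^ (Module.finrank ℚ K - 1) := by
  have : CharZero K := charZero_of_injective_algebraMap (algebraMap ℚ K).injective
  have hσP : ∀ σ : K →ₐ[ℚ] ℂ, σ (aeval x P) = aeval (σ x) P := fun σ =>
    (aeval_algHom_apply (σ.restrictScalars ℤ) x P).symm
  have hσ : ∀ σ : K →ₐ[ℚ] ℂ, ‖σ (e ^ n • aeval x P)‖ = |(e : ℝ)| ^ n * ‖σ (aeval x P)‖ := by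
    intro σ
    rw [map_zsmul, zsmul_eq_mul, norm_mul, Int.cast_pow, norm_pow, Complex.norm_intCast]
  have hbound := one_le_norm_mul_pow_finrank_sub_one (isIntegral_pow_smul_aeval hx hPn)
    (by rw [zsmul_eq_mul]; exact mul_ne_zero (Int.cast_ne_zero.mpr (pow_ne_zero n he)) hP) σ₀
    (T := |(e : ℝ)| ^ n * ((n + 1) * polyHeight P * M ^ n)) fun σ => by
      rw [hσ, hσP]
      gcongr
      exact norm_aeval_le hPn hM (hxM σ)
  obtain ⟨d, hd⟩ : ∃ d, Module.finrank ℚ K = d + 1 :=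
    Nat.exists_eq_add_one.mpr Module.finrank_pos
  rw [hσ, hd, Nat.add_sub_cancel, mul_pow, ← pow_mul] at hbound
  rw [hd, Nat.add_sub_cancel]
  calc 1 ≤ _ := hbound
    _ = _ := by ring

end NumberField

lemma adeg_add_ratCast (α : ℝ) (r : ℚ) : adeg (α + r) = adeg α := by
  rw [adeg, adeg, ← eq_ratCast (algebraMap ℚ ℝ), minpoly.add_algebraMap, natDegree_comp,
    natDegree_X_sub_C, mul_one]

lemma aeval_ne_zero_of_natDegree_lt_adeg {y : ℝ} {P : ℤ[X]} (hP : P ≠ 0)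
    (hdeg : P.natDegree < adeg y) : aeval y P ≠ 0 := by
  intro h
  have hmap : P.map (algebraMap ℤ ℚ) ≠ 0 :=
    (Polynomial.map_ne_zero_iff (algebraMap ℤ ℚ).injective_int).mpr hP
  have := natDegree_le_natDegree
    (minpoly.degree_le_of_ne_zero ℚ y hmap (by rwa [aeval_map_algebraMap]))
  rw [natDegree_map_eq_of_injective (algebraMap ℤ ℚ).injective_int] at this
  exact absurd this (not_le.mpr hdeg)

lemma isIntegral_mul_smul_add_div {K : Type*} [Field K] [CharZero K] {a : K} {D : ℤ}
    (ha : IsIntegral ℤ (D • a)) (p : ℤ) {q : ℤ} (hq : q ≠ 0) :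
    IsIntegral ℤ ((D * q) • (a + p / q)) := by
  have hqK : (q : K) ≠ 0 := Int.cast_ne_zero.mpr hq
  have : (D * q) • (a + p / q) = q • (D • a) + algebraMap ℤ K (D * p) := by
    simp only [zsmul_eq_mul, eq_intCast]
    field_simp
    push_cast
    ring
  rw [this]
  exact (ha.smul q).add isIntegral_algebraMap

open IntermediateField in
lemma exists_pos_le_abs_aeval_add_div_mul {α : ℝ} (hα : IsAlgebraic ℚ α) {n : ℕ}
    (hn : n < adeg α) :
    ∃ c > 0, ∀ P : ℤ[X], P ≠ 0 → P.natDegree ≤ n → ∀ p q : ℤ, 0 < q → |p| ≤ q →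
      c ≤ |aeval (α + p / q) P| * (polyHeight P : ℝ) ^ (adeg α - 1) * (q : ℝ) ^ (n * adeg α) := by
  have : FiniteDimensional ℚ ℚ⟮α⟯ := adjoin.finiteDimensional hα.isIntegral
  have hd : Module.finrank ℚ ℚ⟮α⟯ = adeg α := adjoin.finrank hα.isIntegral
  set a : ℚ⟮α⟯ := AdjoinSimple.gen ℚ α
  obtain ⟨D, hD0, hDa⟩ := ((IsFractionRing.isAlgebraic_iff ℤ ℚ ℚ⟮α⟯).mpr
    (Algebra.IsAlgebraic.isAlgebraic a)).exists_integral_multiple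
  set M : ℝ := 1 + ∑ σ : ℚ⟮α⟯ →ₐ[ℚ] ℂ, ‖σ a‖
  have hM : 1 ≤ M := le_add_of_nonneg_right (Finset.sum_nonneg fun σ _ => norm_nonneg _)
  have hC : 0 < |(D : ℝ)| ^ (n * adeg α) * ((n + 1) * M ^ n) ^ (adeg α - 1) := by
    have := abs_pos.mpr (Int.cast_ne_zero.mpr hD0 : (D : ℝ) ≠ 0)
    positivity
  refine ⟨_, inv_pos.mpr hC, fun P hP hPn p q hq hpq => ?_⟩
  set x : ℚ⟮α⟯ := a + p / q
  have hxM (σ : ℚ⟮α⟯ →ₐ[ℚ] ℂ) : ‖σ x‖ ≤ M := by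
    have hpq' : ‖(p : ℂ) / q‖ ≤ 1 := by
      rw [norm_div, Complex.norm_intCast, Complex.norm_intCast, abs_of_pos (Int.cast_pos.mpr hq)]
      exact div_le_one_of_le₀ (by exact_mod_cast hpq) (by positivity)
    have := Finset.single_le_sum (fun τ _ => norm_nonneg (τ a)) (Finset.mem_univ σ)
    rw [map_add, map_div₀, map_intCast, map_intCast]
    linarith [norm_add_le (σ a) ((p : ℂ) / q)]
  have hPx : aeval (α + p / q) P ≠ 0 := by
    refine aeval_ne_zero_of_natDegree_lt_adeg hP ?_
    rw [show (α + p / q : ℝ) = α + ((p / q : ℚ) : ℝ) by push_cast; rfl, adeg_add_ratCast]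
    omega
  let σ₀ : ℚ⟮α⟯ →ₐ[ℚ] ℂ := (Complex.ofRealAm.restrictScalars ℚ).comp (ℚ⟮α⟯.val)
  have hσ₀ : ‖σ₀ (aeval x P)‖ = |aeval (α + p / q) P| := by
    have hval : ((aeval x P : ℚ⟮α⟯) : ℝ) = aeval (α + p / q) P := by
      rw [show α + p / q = ((x : ℚ⟮α⟯) : ℝ) by simp [x, a]]
      exact (aeval_algHom_apply ((ℚ⟮α⟯.val).restrictScalars ℤ) x P).symm
    change ‖(((aeval x P : ℚ⟮α⟯) : ℝ) : ℂ)‖ = _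
    rw [Complex.norm_real, Real.norm_eq_abs, hval]
  have key := one_le_pow_mul_norm_aeval_mul (mul_ne_zero hD0 hq.ne')
    (isIntegral_mul_smul_add_div hDa p hq.ne') hM hxM hPn
    (fun h => hPx (abs_eq_zero.mp (by rw [← hσ₀, h, map_zero, norm_zero]))) σ₀
  rw [hd, hσ₀] at key
  rw [inv_le_iff_one_le_mul₀ hC]
  refine key.trans_eq ?_
  push_cast
  rw [abs_mul, abs_of_pos (Int.cast_pos.mpr hq)]
  simp only [mul_pow]
  ring

lemma exists_pos_le_abs_aeval_add_Lconst_mul_qk_pow {α : ℝ} (hα : IsAlgebraic ℚ α) {n : ℕ}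
    (hn : n < adeg α) :
    ∃ c > 0, ∃ C > 0, ∀ P : ℤ[X], P ≠ 0 → P.natDegree ≤ n → ∀ k, n * adeg α ≤ k →
      2 * C * (polyHeight P : ℝ) ^ adeg α ≤ c * (qk k : ℝ) ^ (k - n * adeg α) →
      c ≤ 2 * (|aeval (α + Lconst) P| * (polyHeight P : ℝ) ^ (adeg α - 1) *
        (qk k : ℝ) ^ (n * adeg α)) := by
  set m := adeg α
  set t := n * m
  obtain ⟨c, hc, hliou⟩ := exists_pos_le_abs_aeval_add_div_mul hα hn
  set C : ℝ := (n + 1) ^ 2 * (|α| + 1) ^ n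
  refine ⟨c, hc, C, by positivity, fun P hP hPn k htk hk => ?_⟩
  set ξ := α + Lconst
  set H : ℝ := (polyHeight P : ℝ)
  have hH : 1 ≤ H := Nat.one_le_cast.mpr (one_le_polyHeight hP)
  have hQ : (1 : ℝ) ≤ qk k := by exact_mod_cast one_le_qk k
  set Q : ℝ := (qk k : ℝ)
  set x₁ := α + pk k / qk k
  have hlow : c ≤ |aeval x₁ P| * H ^ (m - 1) * Q ^ t :=
    hliou P hP hPn (pk k) (qk k) (by linarith [one_le_qk k])
      (by rw [abs_of_nonneg (pk_nonneg k)]; exact pk_le_qk k)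
  have hlip : |aeval x₁ P - aeval ξ P| * Q ^ k ≤ C * H :=
    abs_aeval_add_pk_div_qk_sub_mul_le α hPn k
  have hQk : Q ^ k = Q ^ t * Q ^ (k - t) := by rw [← pow_add, Nat.add_sub_cancel' htk]
  have hHm : H ^ m = H * H ^ (m - 1) := by rw [← pow_succ', Nat.sub_add_cancel (by omega)]
  have htail : |aeval x₁ P - aeval ξ P| * H ^ (m - 1) * Q ^ t ≤ c / 2 := by
    refine le_of_mul_le_mul_right ?_ (by positivity : 0 < c * Q ^ (k - t))
    calc |aeval x₁ P - aeval ξ P| * H ^ (m - 1) * Q ^ t * (c * Q ^ (k - t))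
        = c * H ^ (m - 1) * (|aeval x₁ P - aeval ξ P| * Q ^ k) := by rw [hQk]; ring
      _ ≤ c * H ^ (m - 1) * (C * H) := by gcongr
      _ = c / 2 * (2 * C * H ^ m) := by rw [hHm]; ring
      _ ≤ c / 2 * (c * Q ^ (k - t)) := by gcongr
  have : c ≤ |aeval ξ P| * H ^ (m - 1) * Q ^ t + c / 2 :=
    calc c ≤ |aeval x₁ P| * H ^ (m - 1) * Q ^ t := hlow
      _ ≤ (|aeval ξ P| + |aeval x₁ P - aeval ξ P|) * H ^ (m - 1) * Q ^ t := by
          gcongr; linarith [abs_sub_abs_le_abs_sub (aeval x₁ P) (aeval ξ P)]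
      _ = |aeval ξ P| * H ^ (m - 1) * Q ^ t +
            |aeval x₁ P - aeval ξ P| * H ^ (m - 1) * Q ^ t := by ring
      _ ≤ |aeval ξ P| * H ^ (m - 1) * Q ^ t + c / 2 := by gcongr
  linarith

lemma exists_pos_le_abs_aeval_add_Lconst_mul {α : ℝ} (hα : IsAlgebraic ℚ α) {n : ℕ}
    (hn : n < adeg α) :
    ∃ c > 0, ∀ P : ℤ[X], P ≠ 0 → P.natDegree ≤ n →
      c ≤ |aeval (α + Lconst) P| * (polyHeight P : ℝ) ^ (adeg α - 1 + 2 * n * adeg α ^ 2) := by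
  set m := adeg α
  set t := n * m
  obtain ⟨c, hc, C, hC, hstep⟩ := exists_pos_le_abs_aeval_add_Lconst_mul_qk_pow hα hn
  obtain ⟨C₃, hC₃, hqk⟩ := exists_qk_pow_bounds t
  set B := 1 + 2 * C / c
  have hB : 1 ≤ B := le_add_of_nonneg_right (by positivity)
  refine ⟨c / (2 * C₃ * B ^ (2 * t)), by positivity, fun P hP hPn => ?_⟩
  set H : ℝ := (polyHeight P : ℝ)
  have hH : 1 ≤ H := Nat.one_le_cast.mpr (one_le_polyHeight hP)
  obtain ⟨k, htk, hk₁, hk₂⟩ := hqk (B * H ^ m) (one_le_mul_of_one_le_of_one_le hB (one_le_pow₀ hH))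
  have hk : 2 * C * H ^ m ≤ c * (qk k : ℝ) ^ (k - t) :=
    calc 2 * C * H ^ m = c * (2 * C / c) * H ^ m := by field_simp
      _ ≤ c * (B * H ^ m) := by rw [mul_assoc]; gcongr; linarith
      _ ≤ c * (qk k : ℝ) ^ (k - t) := by gcongr
  rw [div_le_iff₀ (by positivity)]
  calc c ≤ 2 * (|aeval (α + Lconst) P| * H ^ (m - 1) * (qk k : ℝ) ^ t) :=
        hstep P hP hPn k htk hk
    _ ≤ 2 * (|aeval (α + Lconst) P| * H ^ (m - 1) * (C₃ * (B * H ^ m) ^ (2 * t))) := by gcongr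
    _ = |aeval (α + Lconst) P| * H ^ (m - 1 + 2 * n * m ^ 2) * (2 * C₃ * B ^ (2 * t)) := by
        rw [show m - 1 + 2 * n * m ^ 2 = m - 1 + m * (2 * t) by simp only [t]; ring,
          pow_add H, pow_mul H, mul_pow B]
        ring

lemma exists_pos_le_aheight_pow_mul_abs_sub {α : ℝ} (hα : IsAlgebraic ℚ α) {n : ℕ}
    (hn : n < adeg α) :
    ∃ c > 0, ∀ γ : ℝ, IsAlgebraic ℚ γ → adeg γ = n → |α + Lconst - γ| < 1 →
      c ≤ (aheight γ : ℝ) ^ (adeg α + 2 * n * adeg α ^ 2) * |α + Lconst - γ| := by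
  obtain ⟨c, hc, hlower⟩ := exists_pos_le_abs_aeval_add_Lconst_mul hα hn
  set R := |α| + 2
  have hR : 1 ≤ R := by linarith [abs_nonneg α]
  set C : ℝ := (n + 1) ^ 2 * R ^ n
  refine ⟨c / C, by positivity, fun γ hγ hdeg hdist => ?_⟩
  set ξ := α + Lconst
  set P := intMin γ
  have hPn : P.natDegree ≤ n := ((natDegree_intMin γ).trans hdeg).le
  set H : ℝ := (aheight γ : ℝ)
  have hHP : (polyHeight P : ℝ) = H := rfl
  have hξR : |ξ| ≤ R := by linarith [abs_add_Lconst_le α]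
  have hγR : |γ| ≤ R := by
    linarith [abs_add_Lconst_le α, abs_sub_abs_le_abs_sub γ ξ, abs_sub_comm γ ξ]
  have hlip : |aeval ξ P| ≤ C * H * |ξ - γ| := by
    have h := norm_aeval_sub_aeval_le (x := ξ) (y := γ) hPn hR hξR hγR
    rw [show aeval γ P = 0 from aeval_intMin hγ, sub_zero, hHP] at h
    exact h.trans_eq (by rw [Real.norm_eq_abs]; ring)
  rw [div_le_iff₀ (by positivity)]
  calc c ≤ |aeval ξ P| * H ^ (adeg α - 1 + 2 * n * adeg α ^ 2) :=
        hlower P (intMin_ne_zero γ) hPn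
    _ ≤ C * H * |ξ - γ| * H ^ (adeg α - 1 + 2 * n * adeg α ^ 2) := by gcongr
    _ = H ^ (adeg α + 2 * n * adeg α ^ 2) * |ξ - γ| * C := by
        rw [show adeg α + 2 * n * adeg α ^ 2 = adeg α - 1 + 2 * n * adeg α ^ 2 + 1 by omega,
          pow_succ]
        ring

theorem stmt13 (α : ℝ) (hα : IsAlgebraic ℚ α) (m : ℕ) (hm : adeg α = m)
    (n : ℕ) (hn1 : 1 ≤ n) (hnm : n ≤ m - 1) :
    ∀ w : ℝ, w > 2 * (m : ℝ) ^ 2 * n + m - 1 → (wSet (α + Lconst) n w).Finite := by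
  intro w hw
  subst hm
  obtain ⟨c, hc, hlower⟩ := exists_pos_le_aheight_pow_mul_abs_sub hα (n := n) (by omega)
  set s : ℕ := adeg α + 2 * n * adeg α ^ 2
  have hs : (s : ℝ) - (w + 1) < 0 := by push_cast [s]; linarith
  refine (finite_setOf_adeg_eq_aheight_le n ⌈c ^ ((s - (w + 1))⁻¹)⌉₊).subset ?_
  rintro γ ⟨hγ, hdeg, -, hlt⟩
  have hH : (1 : ℝ) ≤ aheight γ := by exact_mod_cast one_le_aheight γ
  have hlt1 : |α + Lconst - γ| < 1 :=
    hlt.trans_le (Real.rpow_le_one_of_one_le_of_nonpos hH (by linarith [s.cast_nonneg (α := ℝ)]))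
  refine ⟨hγ, hdeg, ?_⟩
  have : c < (aheight γ : ℝ) ^ ((s : ℝ) - (w + 1)) :=
    calc c ≤ (aheight γ : ℝ) ^ s * |α + Lconst - γ| := hlower γ hγ hdeg hlt1
      _ < (aheight γ : ℝ) ^ s * (aheight γ : ℝ) ^ (-w - 1) := by gcongr
      _ = (aheight γ : ℝ) ^ ((s : ℝ) - (w + 1)) := by
          rw [← Real.rpow_natCast, ← Real.rpow_add (by positivity)]; ring_nf
  exact_mod_cast ((Real.lt_rpow_inv_iff_of_neg (by positivity) hc hs).mpr this).le.trans
    (Nat.le_ceil _)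
end
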